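/- Let X be a metric space with a Borel probability measure μ such that every nonempty open set has positive μ-measure, let S be an ergodic invertible measure-preserving transformation of (X, μ), and let f : X → ℤ be integrable with ∫ f dμ = 0. Then for μ-almost every x ∈ X there exists a sequence of positive integers n_k → ∞ such that S^{n_k} x → x and ∑_{i=0}^{n_k - 1} f(S^i x) = 0 for every k. -/

import Mathlib

open MeasureTheory Filter Topology

/-!
Following Atkinson, let `G` be the set of points of `B` that never return to `B` at a time where
the Birkhoff sum of `f` vanishes. Two visits of an orbit to `G` carry different Birkhoff sums
(otherwise the earlier visit would return to `B` with zero sum), so up to time `n` the orbit visits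
`G` at most `2 max_{i<n} |S_i f| + 1 = o(n)` times, while by ergodicity it visits `G` about
`μ G * n` times. Hence `μ G = 0`: the skew product `(x, j) ↦ (S x, j + f x)` on `X × ℤ` is
conservative for `μ × count`. The measure charges every ball, so `X` is separable, and Poincaré
recurrence for the skew product at points `(x, 0)` yields returns of `x` close to `x` with vanishing
Birkhoff sums. The one-sided ergodic bounds used above follow from Hopf's maximal ergodic theorem.
-/

theorem Measurable.birkhoffSum {X M : Type*} [MeasurableSpace X] [AddCommMonoid M]
    [MeasurableSpace M] [MeasurableAdd₂ M] {S : X → X} {g : X → M}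
    (hS : Measurable S) (hg : Measurable g) (n : ℕ) : Measurable (birkhoffSum S g n) :=
  Finset.measurable_sum _ fun i _ => hg.comp (hS.iterate i)

section MaximalErgodic

variable {X : Type*} {S : X → X} {g : X → ℝ}

noncomputable def birkhoffMax (S : X → X) (g : X → ℝ) : ℕ → X → ℝ
  | 0 => 0
  | n + 1 => birkhoffMax S g n ⊔ birkhoffSum S g (n + 1)

theorem birkhoffMax_nonneg (n : ℕ) (x : X) : 0 ≤ birkhoffMax S g n x := by
  induction n with
  | zero => rfl
  | succ n ih => exact ih.trans le_sup_left

theorem monotone_birkhoffMax : Monotone (birkhoffMax S g) :=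
  monotone_nat_of_le_succ fun _ => le_sup_left

theorem birkhoffSum_le_birkhoffMax {k n : ℕ} (hkn : k ≤ n) (x : X) :
    birkhoffSum S g k x ≤ birkhoffMax S g n x := by
  refine le_trans ?_ (monotone_birkhoffMax hkn x)
  cases k with
  | zero => simp [birkhoffMax]
  | succ k => exact le_sup_right

theorem birkhoffMax_le_max_zero_add (n : ℕ) (x : X) :
    birkhoffMax S g n x ≤ max 0 (g x + birkhoffMax S g n (S x)) := by
  induction n with
  | zero => simp [birkhoffMax]
  | succ n ih =>
    refine sup_le (ih.trans (max_le_max le_rfl ?_)) (le_max_of_le_right ?_)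
    · exact add_le_add le_rfl (monotone_birkhoffMax n.le_succ _)
    · rw [birkhoffSum_succ']
      exact add_le_add le_rfl (birkhoffSum_le_birkhoffMax n.le_succ _)

variable [MeasurableSpace X] {μ : Measure X}

theorem MeasureTheory.MeasurePreserving.integrable_birkhoffSum (hS : MeasurePreserving S μ μ)
    (hg : Integrable g μ) (n : ℕ) : Integrable (birkhoffSum S g n) μ :=
  integrable_finsetSum _ fun i _ => ((hS.iterate i).integrable_comp hg.aestronglyMeasurable).2 hg

theorem Measurable.birkhoffMax (hS : Measurable S) (hg : Measurable g) (n : ℕ) :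
    Measurable (birkhoffMax S g n) := by
  induction n with
  | zero => exact measurable_const
  | succ n ih => exact ih.sup (hS.birkhoffSum hg (n + 1))

theorem MeasureTheory.MeasurePreserving.integrable_birkhoffMax (hS : MeasurePreserving S μ μ)
    (hg : Integrable g μ) (n : ℕ) : Integrable (birkhoffMax S g n) μ := by
  induction n with
  | zero => exact integrable_zero _ _ _
  | succ n ih => exact ih.sup (hS.integrable_birkhoffSum hg (n + 1))

/-- **Hopf's maximal ergodic theorem.** -/
theorem MeasureTheory.MeasurePreserving.setIntegral_birkhoffMax_pos_nonneg
    (hS : MeasurePreserving S μ μ) (hgm : Measurable g) (hg : Integrable g μ) (n : ℕ) :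
    0 ≤ ∫ x in {x | 0 < birkhoffMax S g n x}, g x ∂μ := by
  set M := birkhoffMax S g n
  set E := {x | 0 < M x}
  have hMm : Measurable M := hS.measurable.birkhoffMax hgm n
  have hM : Integrable M μ := hS.integrable_birkhoffMax hg n
  have hMS : Integrable (M ∘ S) μ := (hS.integrable_comp hM.aestronglyMeasurable).2 hM
  have hE : MeasurableSet E := measurableSet_lt measurable_const hMm
  have hdiff : ∀ x ∈ E, M x - M (S x) ≤ g x := fun x hx => by
    rcases le_max_iff.1 (birkhoffMax_le_max_zero_add (S := S) (g := g) n x) with h | h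
    · exact absurd (hx.trans_le h) (lt_irrefl 0)
    · linarith
  have hME : ∫ x in E, M x ∂μ = ∫ x, M x ∂μ :=
    setIntegral_eq_integral_of_forall_compl_eq_zero fun x hx =>
      (birkhoffMax_nonneg n x).antisymm' (not_lt.1 hx)
  have hMSE : ∫ x in E, M (S x) ∂μ ≤ ∫ x, M (S x) ∂μ :=
    setIntegral_le_integral hMS (.of_forall fun x => birkhoffMax_nonneg n (S x))
  have hMS_eq : ∫ x, M (S x) ∂μ = ∫ x, M x ∂μ := by
    have hMmap : AEStronglyMeasurable M (μ.map S) := by rw [hS.map_eq]; exact hM.1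
    rw [← integral_map hS.aemeasurable hMmap, hS.map_eq]
  calc 0 = ∫ x in E, M x ∂μ - ∫ x, M (S x) ∂μ := by rw [hME, hMS_eq, sub_self]
    _ ≤ ∫ x in E, M x ∂μ - ∫ x in E, M (S x) ∂μ := by gcongr
    _ = ∫ x in E, (M x - M (S x)) ∂μ := (integral_sub hM.integrableOn hMS.integrableOn).symm
    _ ≤ ∫ x in E, g x ∂μ := setIntegral_mono_on (hM.sub hMS).integrableOn hg.integrableOn hE hdiff

end MaximalErgodic

section ErgodicBounds

variable {X : Type*} {S : X → X} {g : X → ℝ}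

theorem bddAbove_range_birkhoffSum_apply_iff (x : X) :
    BddAbove (Set.range fun n => birkhoffSum S g n (S x)) ↔
      BddAbove (Set.range fun n => birkhoffSum S g n x) := by
  constructor
  · rintro ⟨C, hC⟩
    refine ⟨max 0 (g x + C), ?_⟩
    rintro _ ⟨_ | n, rfl⟩
    · simp
    · simp only [birkhoffSum_succ']
      exact le_max_of_le_right (add_le_add le_rfl (hC ⟨n, rfl⟩))
  · rintro ⟨C, hC⟩
    refine ⟨C - g x, ?_⟩
    rintro _ ⟨n, rfl⟩
    have := hC ⟨n + 1, rfl⟩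
    simp only [birkhoffSum_succ'] at this ⊢
    linarith

variable [MeasurableSpace X] {μ : Measure X} [IsProbabilityMeasure μ]

/-- The points where the Birkhoff sums of `g - α` are unbounded above form an invariant set;
by ergodicity it is null or conull, and the maximal ergodic theorem excludes the second case since
`∫ (g - α) < 0`. -/
theorem Ergodic.ae_exists_birkhoffSum_le (hS : Ergodic S μ) (hgm : Measurable g)
    (hg : Integrable g μ) {α : ℝ} (hα : ∫ x, g x ∂μ < α) :
    ∀ᵐ x ∂μ, ∃ C, ∀ n, birkhoffSum S g n x ≤ α * n + C := by
  set h : X → ℝ := fun x => g x - α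
  have hh : Integrable h μ := hg.sub (integrable_const α)
  have hsum : ∀ n x, birkhoffSum S h n x = birkhoffSum S g n x - n * α := fun n x => by
    simp [h, birkhoffSum, Finset.sum_sub_distrib]
  set A := {x | ¬BddAbove (Set.range fun n => birkhoffSum S h n x)}
  have hA : MeasurableSet A :=
    (measurableSet_bddAbove_range fun n => hS.measurable.birkhoffSum
      (hgm.sub measurable_const) n).compl
  have hAinv : S ⁻¹' A = A := Set.ext fun x => not_congr (bddAbove_range_birkhoffSum_apply_iff x)
  suffices μ A = 0 by
    filter_upwards [measure_eq_zero_iff_ae_notMem.1 this] with x hx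
    obtain ⟨C, hC⟩ := not_not.1 hx
    exact ⟨C, fun n => by linarith [hC ⟨n, rfl⟩, hsum n x]⟩
  refine (hS.measure_self_or_compl_eq_zero hA hAinv).resolve_right fun hAc => ?_
  set E : ℕ → Set X := fun n => {x | 0 < birkhoffMax S h n x}
  have hE : ∀ n, MeasurableSet (E n) := fun n =>
    measurableSet_lt measurable_const (hS.measurable.birkhoffMax (hgm.sub measurable_const) n)
  have hEmono : Monotone E := fun m n hmn x hx => hx.trans_le (monotone_birkhoffMax hmn x)
  have hAE : A ⊆ ⋃ n, E n := fun x hx => by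
    obtain ⟨_, ⟨n, rfl⟩, hn⟩ := not_bddAbove_iff.1 hx 0
    exact Set.mem_iUnion.2 ⟨n, hn.trans_le (birkhoffSum_le_birkhoffMax le_rfl x)⟩
  have hEconull : μ.restrict (⋃ n, E n) = μ :=
    Measure.restrict_eq_self_of_ae_mem (measure_mono_null (Set.compl_subset_compl.2 hAE) hAc)
  have hlim := tendsto_setIntegral_of_monotone hE hEmono hh.integrableOn
  rw [hEconull] at hlim
  have hnonneg : 0 ≤ ∫ x, h x ∂μ :=
    ge_of_tendsto' hlim fun n => hS.toMeasurePreserving.setIntegral_birkhoffMax_pos_nonneg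
      (hgm.sub measurable_const) hh n
  have : ∫ x, h x ∂μ = ∫ x, g x ∂μ - α := by simp [h, integral_sub hg (integrable_const α)]
  linarith

theorem Ergodic.ae_exists_le_birkhoffSum (hS : Ergodic S μ) (hgm : Measurable g)
    (hg : Integrable g μ) {α : ℝ} (hα : α < ∫ x, g x ∂μ) :
    ∀ᵐ x ∂μ, ∃ C, ∀ n, α * n - C ≤ birkhoffSum S g n x := by
  have hα' : ∫ x, (-g) x ∂μ < -α := by simpa [integral_neg] using hα
  filter_upwards [hS.ae_exists_birkhoffSum_le hgm.neg hg.neg hα'] with x ⟨C, hC⟩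
  exact ⟨C, fun n => by linarith [hC n, birkhoffSum_neg S g n x]⟩

theorem Ergodic.ae_forall_exists_abs_birkhoffSum_le (hS : Ergodic S μ) (hgm : Measurable g)
    (hg : Integrable g μ) (hg0 : ∫ x, g x ∂μ = 0) :
    ∀ᵐ x ∂μ, ∀ ε > 0, ∃ C, ∀ n, |birkhoffSum S g n x| ≤ ε * n + C := by
  have hpos : ∀ m : ℕ, (0 : ℝ) < 1 / (m + 1) := fun m => by positivity
  have hup := ae_all_iff.2 fun m : ℕ =>
    hS.ae_exists_birkhoffSum_le hgm hg (hg0 ▸ hpos m)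
  have hdown := ae_all_iff.2 fun m : ℕ =>
    hS.ae_exists_le_birkhoffSum hgm hg (hg0 ▸ neg_lt_zero.2 (hpos m))
  filter_upwards [hup, hdown] with x hup hdown ε hε
  obtain ⟨m, hm⟩ := exists_nat_one_div_lt hε
  obtain ⟨C₁, hC₁⟩ := hup m
  obtain ⟨C₂, hC₂⟩ := hdown m
  refine ⟨max C₁ C₂, fun n => ?_⟩
  have : 1 / (m + 1) * (n : ℝ) ≤ ε * n := by gcongr
  exact abs_le.2 ⟨by linarith [hC₂ n, le_max_right C₁ C₂], by linarith [hC₁ n, le_max_left C₁ C₂]⟩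

end ErgodicBounds

open Finset in
theorem Finset.card_le_two_mul_add_one_of_injOn {ι : Type*} {s : Finset ι} {v : ι → ℤ} {M : ℝ}
    (hM : 0 ≤ M) (hv : Set.InjOn v s) (hle : ∀ i ∈ s, |(v i : ℝ)| ≤ M) :
    (#s : ℝ) ≤ 2 * M + 1 := by
  have hmem : ∀ i ∈ s, v i ∈ Icc (-⌊M⌋) ⌊M⌋ := fun i hi =>
    mem_Icc.2 (abs_le.1 (Int.le_floor.2 (by exact_mod_cast hle i hi)))
  have hcard := card_le_card_of_injOn v hmem hv
  have hfloor : 0 ≤ ⌊M⌋ := Int.floor_nonneg.2 hM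
  rw [Int.card_Icc, show ⌊M⌋ + 1 - -⌊M⌋ = 2 * ⌊M⌋ + 1 by ring] at hcard
  have : (#s : ℤ) ≤ 2 * ⌊M⌋ + 1 := by omega
  have : (#s : ℝ) ≤ 2 * ⌊M⌋ + 1 := by exact_mod_cast this
  linarith [Int.floor_le M]

open Finset in
theorem birkhoffSum_indicator_one {X : Type*} (S : X → X) (s : Set X) [DecidablePred (· ∈ s)]
    (n : ℕ) (x : X) : birkhoffSum S (s.indicator 1) n x = (#{i ∈ range n | S^[i] x ∈ s} : ℝ) := by
  simp [birkhoffSum, Set.indicator_apply]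

section Atkinson

variable {X : Type*} {S : X → X} {f : X → ℤ} {B : Set X}

def noZeroSumReturn (S : X → X) (f : X → ℤ) (B : Set X) : Set X :=
  {x | x ∈ B ∧ ∀ n, 0 < n → S^[n] x ∈ B → birkhoffSum S f n x ≠ 0}

theorem injOn_birkhoffSum_noZeroSumReturn (x : X) :
    Set.InjOn (fun i => birkhoffSum S f i x) {i | S^[i] x ∈ noZeroSumReturn S f B} := by
  have key : ∀ i j, i < j → S^[i] x ∈ noZeroSumReturn S f B →
      S^[j] x ∈ noZeroSumReturn S f B → birkhoffSum S f i x ≠ birkhoffSum S f j x := by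
    intro i j hij hi hj heq
    obtain ⟨k, rfl⟩ := Nat.exists_eq_add_of_lt hij
    have hret : S^[k + 1] (S^[i] x) = S^[i + k + 1] x := by
      rw [← Function.iterate_add_apply]; congr 1; omega
    refine hi.2 (k + 1) k.succ_pos (hret ▸ hj.1) ?_
    have := birkhoffSum_add S f i (k + 1) x
    rw [show i + (k + 1) = i + k + 1 by omega] at this
    linarith
  intro i hi j hj heq
  rcases lt_trichotomy i j with h | h | h
  · exact absurd heq (key i j h hi hj)
  · exact h
  · exact absurd heq.symm (key j i h hj hi)

variable [MeasurableSpace X]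

theorem measurableSet_noZeroSumReturn (hS : Measurable S) (hf : Measurable f)
    (hB : MeasurableSet B) : MeasurableSet (noZeroSumReturn S f B) :=
  measurableSet_setOfPred.2 <| hB.mem.and <| Measurable.forall fun n =>
    measurable_const.imp <| ((hS.iterate n) hB).mem.imp ((hS.birkhoffSum hf n).eq_const 0).not

variable {μ : Measure X} [IsProbabilityMeasure μ]

/-- **Atkinson's theorem.** -/
theorem Ergodic.measure_noZeroSumReturn_eq_zero (hS : Ergodic S μ) (hf : Measurable f)
    (hfi : Integrable (fun x => (f x : ℝ)) μ) (hf0 : ∫ x, (f x : ℝ) ∂μ = 0)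
    (hB : MeasurableSet B) : μ (noZeroSumReturn S f B) = 0 := by
  classical
  set G := noZeroSumReturn S f B
  have hG : MeasurableSet G := measurableSet_noZeroSumReturn hS.measurable hf hB
  by_contra hG0
  set b := μ.real G
  have hb : 0 < b := ENNReal.toReal_pos hG0 (measure_ne_top μ G)
  have hind : ∫ x, G.indicator 1 x ∂μ = b := integral_indicator_one hG
  have hvisits := hS.ae_exists_le_birkhoffSum (measurable_one.indicator hG)
    ((integrable_const 1).indicator hG) (by rw [hind]; exact half_lt_self hb)
  have hsums := hS.ae_forall_exists_abs_birkhoffSum_le (g := fun x => (f x : ℝ))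
    (measurable_from_top.comp hf) hfi hf0
  obtain ⟨x, ⟨C₁, hC₁⟩, hx⟩ := (hvisits.and hsums).exists
  obtain ⟨C₂, hC₂⟩ := hx (b / 8) (by positivity)
  have hC₂0 : 0 ≤ C₂ := by simpa using hC₂ 0
  have hcount : ∀ n : ℕ, b / 2 * n - C₁ ≤ 2 * (b / 8 * n + C₂) + 1 := fun n => by
    refine (hC₁ n).trans ?_
    rw [birkhoffSum_indicator_one]
    refine Finset.card_le_two_mul_add_one_of_injOn (by positivity)
      ((injOn_birkhoffSum_noZeroSumReturn x).mono fun i hi => (Finset.mem_filter.1 hi).2)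
      fun i hi => ?_
    have hin : (i : ℝ) ≤ n := by exact_mod_cast (Finset.mem_range.1 (Finset.mem_filter.1 hi).1).le
    have hcast : ((birkhoffSum S f i x : ℤ) : ℝ) = birkhoffSum S (fun y => (f y : ℝ)) i x :=
      map_birkhoffSum (Int.castAddHom ℝ) S f i x
    have : b / 8 * (i : ℝ) ≤ b / 8 * n := by gcongr
    linarith [hcast ▸ hC₂ i]
  obtain ⟨n, hn⟩ := exists_nat_gt (4 * (C₁ + 2 * C₂ + 1) / b)
  rw [div_lt_iff₀ hb] at hn
  linarith [hcount n]

theorem Ergodic.exists_iterate_mem_birkhoffSum_eq_zero (hS : Ergodic S μ) (hf : Measurable f)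
    (hfi : Integrable (fun x => (f x : ℝ)) μ) (hf0 : ∫ x, (f x : ℝ) ∂μ = 0)
    (hB : MeasurableSet B) (hB0 : μ B ≠ 0) :
    ∃ x ∈ B, ∃ n, 0 < n ∧ S^[n] x ∈ B ∧ birkhoffSum S f n x = 0 := by
  have hdiff : μ (B \ noZeroSumReturn S f B) ≠ 0 := by
    rwa [measure_sdiff_null (hS.measure_noZeroSumReturn_eq_zero hf hfi hf0 hB)]
  obtain ⟨x, hxB, hxG⟩ := nonempty_of_measure_ne_zero hdiff
  simp only [noZeroSumReturn, Set.mem_ofPred_eq, not_and, not_forall, not_not, exists_prop] at hxG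
  exact ⟨x, hxB, hxG hxB⟩

end Atkinson

section SkewProduct

open Measure

variable {X : Type*} {S : X → X} {f : X → ℤ}

def skewProduct (S : X → X) (f : X → ℤ) (p : X × ℤ) : X × ℤ := (S p.1, p.2 + f p.1)

theorem iterate_skewProduct (n : ℕ) (x : X) (j : ℤ) :
    (skewProduct S f)^[n] (x, j) = (S^[n] x, j + birkhoffSum S f n x) := by
  induction n generalizing x j with
  | zero => simp
  | succ n ih =>
    rw [Function.iterate_succ_apply, skewProduct, ih, birkhoffSum_succ', add_assoc]
    rfl

variable [MeasurableSpace X] {μ : Measure X}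

theorem prod_count_apply [SFinite μ] {s : Set (X × ℤ)} (hs : MeasurableSet s) :
    μ.prod count s = ∑' j, μ ((·, j) ⁻¹' s) := by
  rw [prod_apply_symm hs, lintegral_count]

theorem measurable_skewProduct (hS : Measurable S) (hf : Measurable f) :
    Measurable (skewProduct S f) :=
  (hS.comp measurable_fst).prodMk (measurable_snd.add (hf.comp measurable_fst))

theorem quasiMeasurePreserving_skewProduct [SFinite μ] (hS : QuasiMeasurePreserving S μ μ)
    (hf : Measurable f) :
    QuasiMeasurePreserving (skewProduct S f) (μ.prod count) (μ.prod count) := by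
  have hT := measurable_skewProduct hS.measurable hf
  refine ⟨hT, AbsolutelyContinuous.mk fun s hs hs0 => ?_⟩
  rw [prod_count_apply hs, ENNReal.tsum_eq_zero] at hs0
  rw [map_apply hT hs, prod_count_apply (hT hs), ENNReal.tsum_eq_zero]
  refine fun j => measure_mono_null (t := ⋃ k : ℤ, S ⁻¹' ((·, j + k) ⁻¹' s)) ?_ ?_
  · exact fun x hx => Set.mem_iUnion.2 ⟨f x, hx⟩
  · exact measure_iUnion_null fun k => hS.preimage_null (hs0 (j + k))

theorem Ergodic.conservative_skewProduct [IsProbabilityMeasure μ] (hS : Ergodic S μ)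
    (hf : Measurable f) (hfi : Integrable (fun x => (f x : ℝ)) μ)
    (hf0 : ∫ x, (f x : ℝ) ∂μ = 0) : Conservative (skewProduct S f) (μ.prod count) := by
  refine ⟨quasiMeasurePreserving_skewProduct hS.quasiMeasurePreserving hf, fun s hs hs0 => ?_⟩
  rw [prod_count_apply hs, Ne, ENNReal.tsum_eq_zero, not_forall] at hs0
  obtain ⟨j, hj⟩ := hs0
  obtain ⟨x, hx, n, hn, hnx, hsum⟩ :=
    hS.exists_iterate_mem_birkhoffSum_eq_zero hf hfi hf0 (measurable_prodMk_right hs) hj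
  refine ⟨(x, j), hx, n, hn.ne', ?_⟩
  rwa [iterate_skewProduct, hsum, add_zero]

end SkewProduct

/-- A maximal `ε`-separated set is `ε`-dense, and it is countable since the disjoint `ε / 2`-balls
around its points have positive measure. -/
theorem secondCountableTopology_of_isOpenPosMeasure {Y : Type*} [PseudoMetricSpace Y]
    [MeasurableSpace Y] [OpensMeasurableSpace Y] (μ : Measure Y) [SFinite μ]
    [μ.IsOpenPosMeasure] : SecondCountableTopology Y := by
  refine Metric.secondCountable_of_almost_dense_set fun ε hε => ?_
  obtain ⟨t, ht⟩ := zorn_subset {t : Set Y | t.Pairwise (ε < dist · ·)} fun c hc hchain =>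
    ⟨⋃₀ c, hchain.pairwise_sUnion.2 hc, fun _ => Set.subset_sUnion_of_mem⟩
  refine ⟨t, ?_, fun x => ?_⟩
  · have hdisj : Pairwise (Function.onFun Disjoint fun y : t => Metric.ball (y : Y) (ε / 2)) :=
      fun y z hyz => Metric.ball_disjoint_ball (show ε / 2 + ε / 2 ≤ dist (y : Y) z by
        linarith [ht.prop y.2 z.2 (Subtype.coe_ne_coe.2 hyz)])
    have := Measure.countable_meas_pos_of_disjoint_iUnion (μ := μ)
      (fun _ => Metric.isOpen_ball.measurableSet) hdisj
    simp only [Metric.measure_ball_pos μ _ (half_pos hε), Set.ofPred_true,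
      Set.countable_univ_iff] at this
    exact Set.countable_coe_iff.1 this
  · by_contra! hfar
    have hxt : x ∉ t := fun hx => by linarith [hfar x hx, dist_self x]
    refine hxt (ht.2 (ht.prop.insert fun y hy _ => ⟨hfar y hy, ?_⟩) (Set.subset_insert x t)
      (Set.mem_insert x t))
    rw [dist_comm]
    exact hfar y hy

theorem exists_strictMono_tendsto_of_frequently {Y : Type*} [TopologicalSpace Y]
    [FirstCountableTopology Y] {u : ℕ → Y} {y : Y} {p : ℕ → Prop}
    (h : ∀ s ∈ 𝓝 y, ∃ᶠ m in atTop, u m ∈ s ∧ p m) :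
    ∃ n : ℕ → ℕ, StrictMono n ∧ (∀ k, p (n k)) ∧ Tendsto (u ∘ n) atTop (𝓝 y) := by
  obtain ⟨t, ht⟩ := (𝓝 y).exists_antitone_basis
  obtain ⟨n, hn, hnt⟩ := extraction_forall_of_frequently fun k => h (t k) (ht.mem k)
  exact ⟨n, hn, fun k => (hnt k).2, ht.tendsto fun k => (hnt k).1⟩

/-- **Topological Krygin–Atkinson theorem.** On a metric space with a Borel
probability measure giving positive mass to every nonempty open set, for an
ergodic invertible measure-preserving `S` and integrable zero-mean `f : X → ℤ`,
almost every `x` admits positive times `n_k → ∞` with `S^[n_k] x → x` and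
vanishing Birkhoff sums. -/
theorem krygin_atkinson_topological {X : Type*} [MetricSpace X] [MeasurableSpace X]
    [BorelSpace X] (μ : Measure X) [IsProbabilityMeasure μ]
    (hopen : ∀ U : Set X, IsOpen U → U.Nonempty → 0 < μ U)
    (S : X ≃ᵐ X) (hS : Ergodic (⇑S) μ)
    (f : X → ℤ) (hf : Measurable f)
    (hfi : Integrable (fun x => (f x : ℝ)) μ)
    (hf0 : ∫ x, (f x : ℝ) ∂μ = 0) :
    ∀ᵐ x ∂μ, ∃ n : ℕ → ℕ, (∀ k, 0 < n k) ∧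
      Tendsto n atTop atTop ∧
      Tendsto (fun k => (⇑S)^[n k] x) atTop (𝓝 x) ∧
      ∀ k, ∑ i ∈ Finset.range (n k), f ((⇑S)^[i] x) = 0 := by
  have : μ.IsOpenPosMeasure := ⟨fun U hU hne => (hopen U hU hne).ne'⟩
  have := secondCountableTopology_of_isOpenPosMeasure μ
  have hrec := (hS.conservative_skewProduct hf hfi hf0).ae_frequently_mem_of_mem_nhds
  filter_upwards [Measure.ae_ae_of_ae_prod hrec] with x hx
  have hret : ∀ s ∈ 𝓝 x, ∃ᶠ m in atTop, S^[m] x ∈ s ∧ 0 < m ∧ birkhoffSum S f m x = 0 :=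
    fun s hs => by
      have := (Measure.ae_count_iff.1 hx 0) (s ×ˢ {0}) (prod_mem_nhds hs (by simp))
      refine (this.and_eventually (eventually_gt_atTop 0)).mono fun m ⟨hm, hm0⟩ => ?_
      simp only [iterate_skewProduct, Set.mem_prod, Set.mem_singleton_iff, zero_add] at hm
      exact ⟨hm.1, hm0, hm.2⟩
  obtain ⟨n, hn, hnret, hlim⟩ := exists_strictMono_tendsto_of_frequently hret
  exact ⟨n, fun k => (hnret k).1, hn.tendsto_atTop, hlim, fun k => (hnret k).2⟩
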